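/- For the logistic map x_{k+1} = 3.71·x_k·(1−x_k) with initial value x₀ = 1/2ⁿ (n a positive natural number), there exists an integer k with 0 ≤ k ≤ 2n such that x_k > 1/2. -/

import Mathlib

/-!
While an orbit of `t ↦ a t (1 - t)` stays in `[0, 1/2]`, each step multiplies it by at least
`a / 2`. For `a = 3.71` two steps gain a factor `1.855 ^ 2 > 2`, so starting from `1 / 2 ^ n`
the orbit would reach `1` within `2 n` steps; hence it must leave `[0, 1/2]` by then.
-/

lemma half_mul_le_logistic {a t : ℝ} (ha : 0 ≤ a) (ht₀ : 0 ≤ t) (ht : t ≤ 1 / 2) :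
    a / 2 * t ≤ a * t * (1 - t) := by
  have : 0 ≤ a * t * (1 / 2 - t) := mul_nonneg (mul_nonneg ha ht₀) (by linarith)
  linarith

lemma logistic_orbit_ge_geometric {a : ℝ} (ha : 0 ≤ a) {x : ℕ → ℝ} (hx0 : 0 ≤ x 0)
    (hrec : ∀ k, x (k + 1) = a * x k * (1 - x k)) {k : ℕ} (hk : ∀ j < k, x j ≤ 1 / 2) :
    (a / 2) ^ k * x 0 ≤ x k := by
  induction k with
  | zero => simp
  | succ m ih =>
    have ihm := ih fun j hj => hk j (Nat.lt_succ_of_lt hj)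
    have hxm : 0 ≤ x m := le_trans (by positivity) ihm
    calc (a / 2) ^ (m + 1) * x 0 = a / 2 * ((a / 2) ^ m * x 0) := by ring
      _ ≤ a / 2 * x m := by gcongr
      _ ≤ x (m + 1) := hrec m ▸ half_mul_le_logistic ha hxm (hk m (Nat.lt_succ_self m))

theorem logistic_amplifies_in_2n_steps_general
    (n : ℕ)
    (x : ℕ → ℝ) (hx0 : x 0 = 1 / 2 ^ n)
    (hrec : ∀ k : ℕ, x (k + 1) = 3.71 * x k * (1 - x k)) :
    ∃ k : ℕ, k ≤ 2 * n ∧ x k > 1 / 2 := by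
  by_contra! h
  have hgrowth := logistic_orbit_ge_geometric (by norm_num) (by rw [hx0]; positivity) hrec
    (k := 2 * n) fun j hj => h j hj.le
  have hone : (1 : ℝ) ≤ (3.71 / 2) ^ (2 * n) * x 0 := by
    rw [hx0, pow_mul, mul_one_div, ← div_pow]
    exact one_le_pow₀ (by norm_num)
  linarith [h (2 * n) le_rfl]

theorem logistic_amplifies_in_2n_steps
    (n : ℕ) (hn : 1 ≤ n)
    (x : ℕ → ℝ) (hx0 : x 0 = 1 / 2 ^ n)
    (hrec : ∀ k : ℕ, x (k + 1) = 3.71 * x k * (1 - x k)) :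
    ∃ k : ℕ, k ≤ 2 * n ∧ x k > 1 / 2 :=
  logistic_amplifies_in_2n_steps_general n x hx0 hrec
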